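/- Let m ∈ ℕ and let R_n h = z^m h + Σ_{i=1}^n ⟨h, u_i⟩ v_i on H^2 with {u_i} orthonormal and {v_i} orthogonal. Then Ker R_n is nearly S*-invariant with defect at most n, with defect space F = span{(S*)^{m+1} v_i : 1 ≤ i ≤ n}. -/

import Mathlib

open MeasureTheory Complex Real ComplexConjugate
open scoped ENNReal

noncomputable section

instance : Fact (0 < 2 * π) := ⟨by positivity⟩

/-- The unit circle, modelled as `ℝ / 2πℤ`. -/
abbrev UnitCircle : Type := AddCircle (2 * π)

/-- Normalized Haar (Lebesgue) measure on the circle. -/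
abbrev μc : Measure UnitCircle := AddCircle.haarAddCircle

/-- The space `L²(𝕋)`. -/
abbrev L2T : Type := Lp ℂ 2 μc

/-- The Hardy space `H²`, the closed span of `{eⁱⁿᵗ : n ≥ 0}` inside `L²(𝕋)`. -/
def H2 : Submodule ℂ L2T :=
  (Submodule.span ℂ (Set.range fun n : ℕ => (fourierLp 2 (n : ℤ) : L2T))).topologicalClosure

instance : CompleteSpace H2 :=
  IsClosed.completeSpace_coe (hs := Submodule.isClosed_topologicalClosure _)

/-- The orthogonal projection `P : L²(𝕋) → H²`. -/
def PH2 : L2T →L[ℂ] H2 := H2.orthogonalProjectionOnto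

/-- Multiplication of an `L²` function by an essentially bounded symbol. -/
def symbMul (g : UnitCircle → ℂ) (hg : MemLp g ∞ μc) (f : L2T) : L2T :=
  ((Lp.memLp f).smul (p := ∞) (r := 2) hg).toLp (g • ⇑f)

/-- The Toeplitz operator `T_g f = P(gf)`, viewed as a map `L²(𝕋) → L²(𝕋)`
(its restriction to `H²` is the classical Toeplitz operator). -/
def Toeplitz (g : UnitCircle → ℂ) (hg : MemLp g ∞ μc) (f : L2T) : L2T :=
  (PH2 (symbMul g hg f) : L2T)

/-- The boundary coordinate function `z = eⁱᵗ` on the circle. -/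
def zfun : UnitCircle → ℂ := fun x => fourier 1 x

lemma zfun_memLinfty : MemLp zfun ∞ μc := by
  refine memLp_top_of_bound ((fourier 1).continuous.aestronglyMeasurable) 1 ?_
  filter_upwards with x
  simp [zfun, Circle.norm_coe]

lemma conj_zfun_memLinfty : MemLp (fun x => conj (zfun x)) ∞ μc := by
  refine memLp_top_of_bound (Continuous.aestronglyMeasurable (Complex.continuous_conj.comp ((fourier 1).continuous))) 1 ?_
  filter_upwards with x
  simp [zfun, Circle.norm_coe]

/-- The backward shift `S* = T_{z̄}` on `L²`; its restriction to `H²` is the classical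
backward shift `(S^*f)(z) = (f(z)-f(0))/z`. -/
def Sstar (f : L2T) : L2T := Toeplitz (fun x => conj (zfun x)) conj_zfun_memLinfty f

/-- Evaluation of (the analytic extension of) `f` at the origin: the mean value `f(0) = ∫ f`. -/
def ev0 (f : L2T) : ℂ := ∫ x, f x ∂μc

/-- The constant function `1` as an element of `L²(𝕋)` (it is `e⁰`). -/
def onefun : L2T := fourierLp 2 (0 : ℤ)

lemma zpow_memLinfty (m : ℕ) : MemLp (fun x => zfun x ^ m) ∞ μc := by
  refine memLp_top_of_bound (Continuous.aestronglyMeasurable (by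
    exact Continuous.pow (fourier 1).continuous m)) 1 ?_
  filter_upwards with x
  simp [zfun, Circle.norm_coe]

/-- An essentially bounded symbol is in particular square-integrable: the associated `L²`
element. -/
def toL2 (g : UnitCircle → ℂ) (hg : MemLp g ∞ μc) : L2T :=
  (hg.mono_exponent le_top).toLp g

/-- A bounded symbol `g` is *analytic* (i.e. belongs to `H^∞`) iff multiplication by `g`
preserves the Hardy space `H²`. -/
def IsAnalytic (g : UnitCircle → ℂ) (hg : MemLp g ∞ μc) : Prop :=
  ∀ f : L2T, f ∈ H2 → symbMul g hg f ∈ H2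

/-- A bounded symbol is *inner* if it is analytic and unimodular a.e. on the circle. -/
def IsInner (g : UnitCircle → ℂ) (hg : MemLp g ∞ μc) : Prop :=
  IsAnalytic g hg ∧ ∀ᵐ x ∂μc, ‖g x‖ = 1

/-- The subspace `θ·H²` of `L²(𝕋)`. -/
def mulH2 (θ : UnitCircle → ℂ) (hθ : MemLp θ ∞ μc) : Submodule ℂ L2T :=
  Submodule.span ℂ {f : L2T | ∃ h ∈ H2, f = symbMul θ hθ h}

/-- The model space `K_θ = H² ⊖ θH²`. -/
def Kmodel (θ : UnitCircle → ℂ) (hθ : MemLp θ ∞ μc) : Submodule ℂ L2T :=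
  H2 ⊓ (mulH2 θ hθ)ᗮ

instance (θ : UnitCircle → ℂ) (hθ : MemLp θ ∞ μc) : CompleteSpace (Kmodel θ hθ) := by
  refine IsClosed.completeSpace_coe (hs := ?_)
  have : ((Kmodel θ hθ : Submodule ℂ L2T) : Set L2T)
      = (H2 : Set L2T) ∩ ((mulH2 θ hθ)ᗮ : Set L2T) := rfl
  rw [this]
  exact (Submodule.isClosed_topologicalClosure _).inter (Submodule.isClosed_orthogonal _)

/-- An element `u ∈ H²` is *outer* if the polynomial multiples of `u` are dense in `H²`
(Beurling). -/
def IsOuterL2 (uL : L2T) : Prop :=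
  (Submodule.span ℂ
    (Set.range fun n : ℕ => symbMul (fun x => zfun x ^ n) (zpow_memLinfty n) uL)).topologicalClosure
    = H2

open scoped ComplexInnerProductSpace

instance (U : Submodule ℂ L2T) : CompleteSpace (H2 ⊓ Uᗮ : Submodule ℂ L2T) := by
  refine IsClosed.completeSpace_coe (hs := ?_)
  have : ((H2 ⊓ Uᗮ : Submodule ℂ L2T) : Set L2T) = (H2 : Set L2T) ∩ (Uᗮ : Set L2T) := rfl
  rw [this]
  exact (Submodule.isClosed_topologicalClosure _).inter (Submodule.isClosed_orthogonal _)

/-!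
If `z^m h + Σ cᵢ vᵢ = 0` with `h ∈ H²`, applying `(S*)^{m+1}` and using `S*(z f) = f` on `H²`
gives `S* h = -Σ cᵢ (S*)^{m+1} vᵢ`. Thus `S*` maps the kernel of `Rₙ` into
`F = span{(S*)^{m+1} vᵢ}`, and `w = -S* h ∈ F` already puts `S* h + w = 0` in the kernel.
-/

section Multiplication

variable (g : UnitCircle → ℂ) (hg : MemLp g ∞ μc)

lemma coeFn_symbMul (f : L2T) : symbMul g hg f =ᵐ[μc] fun x => g x * f x :=
  MemLp.coeFn_toLp _

lemma symbMul_add (f f' : L2T) :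
    symbMul g hg (f + f') = symbMul g hg f + symbMul g hg f' := by
  apply Lp.ext
  filter_upwards [coeFn_symbMul g hg (f + f'), coeFn_symbMul g hg f, coeFn_symbMul g hg f',
    Lp.coeFn_add f f', Lp.coeFn_add (symbMul g hg f) (symbMul g hg f')] with x h h₁ h₂ hadd hadd'
  rw [h, hadd', Pi.add_apply, h₁, h₂, hadd, Pi.add_apply, mul_add]

lemma symbMul_smul (c : ℂ) (f : L2T) : symbMul g hg (c • f) = c • symbMul g hg f := by
  apply Lp.ext
  filter_upwards [coeFn_symbMul g hg (c • f), coeFn_symbMul g hg f,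
    Lp.coeFn_smul c f, Lp.coeFn_smul c (symbMul g hg f)] with x h h₁ hsmul hsmul'
  rw [h, hsmul', Pi.smul_apply, h₁, hsmul, Pi.smul_apply, smul_eq_mul, smul_eq_mul, mul_left_comm]

lemma norm_symbMul_le (f : L2T) : ‖symbMul g hg f‖ ≤ (eLpNorm g ∞ μc).toReal * ‖f‖ := by
  rw [symbMul, Lp.norm_toLp, Lp.norm_def, ← ENNReal.toReal_mul]
  exact ENNReal.toReal_mono (ENNReal.mul_ne_top hg.eLpNorm_ne_top (Lp.eLpNorm_ne_top f))
    (eLpNorm_smul_le_eLpNorm_top_mul_eLpNorm 2 (Lp.aestronglyMeasurable f) g)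

def symbMulL : L2T →L[ℂ] L2T :=
  LinearMap.mkContinuous
    { toFun := symbMul g hg
      map_add' := symbMul_add g hg
      map_smul' := symbMul_smul g hg } _ (norm_symbMul_le g hg)

lemma symbMulL_apply (f : L2T) : symbMulL g hg f = symbMul g hg f := rfl

def toeplitzL : L2T →L[ℂ] L2T := H2.starProjection ∘L symbMulL g hg

lemma coe_toeplitzL : ⇑(toeplitzL g hg) = Toeplitz g hg := rfl

end Multiplication

lemma symbMul_symbMul {g g₁ g₂ : UnitCircle → ℂ} (hg : MemLp g ∞ μc) (hg₁ : MemLp g₁ ∞ μc)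
    (hg₂ : MemLp g₂ ∞ μc) (hmul : ∀ᵐ x ∂μc, g x = g₁ x * g₂ x) (f : L2T) :
    symbMul g₁ hg₁ (symbMul g₂ hg₂ f) = symbMul g hg f := by
  apply Lp.ext
  filter_upwards [coeFn_symbMul g₁ hg₁ (symbMul g₂ hg₂ f), coeFn_symbMul g₂ hg₂ f,
    coeFn_symbMul g hg f, hmul] with x h₁ h₂ h hx
  rw [h₁, h₂, h, hx, mul_assoc]

lemma symbMul_of_ae_eq_one {g : UnitCircle → ℂ} (hg : MemLp g ∞ μc) (h1 : ∀ᵐ x ∂μc, g x = 1)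
    (f : L2T) : symbMul g hg f = f := by
  apply Lp.ext
  filter_upwards [coeFn_symbMul g hg f, h1] with x h hx
  rw [h, hx, one_mul]

lemma Toeplitz_eq_symbMul {g : UnitCircle → ℂ} {hg : MemLp g ∞ μc} (hana : IsAnalytic g hg)
    {f : L2T} (hf : f ∈ H2) : Toeplitz g hg f = symbMul g hg f :=
  Submodule.starProjection_eq_self_iff.mpr (hana f hf)

lemma symbMul_zfun_fourierLp (k : ℤ) :
    symbMul zfun zfun_memLinfty (fourierLp 2 k) = fourierLp 2 (k + 1) := by
  apply Lp.ext
  filter_upwards [coeFn_symbMul zfun zfun_memLinfty (fourierLp 2 k),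
    coeFn_fourierLp 2 k, coeFn_fourierLp 2 (k + 1)] with x h hk hk₁
  rw [h, hk, hk₁, add_comm, fourier_add]
  rfl

lemma isAnalytic_zfun : IsAnalytic zfun zfun_memLinfty := by
  set S := Submodule.span ℂ (Set.range fun n : ℕ => (fourierLp 2 (n : ℤ) : L2T))
  have hspan : S ≤ S.comap (symbMulL zfun zfun_memLinfty).toLinearMap := by
    refine Submodule.span_le.mpr ?_
    rintro _ ⟨k, rfl⟩
    rw [SetLike.mem_coe, Submodule.mem_comap, ContinuousLinearMap.coe_coe, symbMulL_apply,
      symbMul_zfun_fourierLp]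
    exact Submodule.subset_span ⟨k + 1, by push_cast; rfl⟩
  have hmaps : Set.MapsTo (symbMulL zfun zfun_memLinfty) S S := fun _ hx => hspan hx
  exact fun f hf => hmaps.closure (symbMulL zfun zfun_memLinfty).continuous hf

lemma isAnalytic_zfun_pow (m : ℕ) : IsAnalytic (fun x => zfun x ^ m) (zpow_memLinfty m) := by
  induction m with
  | zero =>
    intro f hf
    rwa [symbMul_of_ae_eq_one _ (.of_forall fun x => pow_zero (zfun x))]
  | succ m ih =>
    intro f hf
    rw [← symbMul_symbMul _ zfun_memLinfty (zpow_memLinfty m)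
      (.of_forall fun x => pow_succ' (zfun x) m)]
    exact isAnalytic_zfun _ (ih f hf)

lemma Sstar_symbMul_zfun {f : L2T} (hf : f ∈ H2) : Sstar (symbMul zfun zfun_memLinfty f) = f := by
  have hunit : ∀ x, (1 : ℂ) = conj (zfun x) * zfun x := fun x => by
    rw [mul_comm, Complex.mul_conj, Complex.normSq_eq_norm_sq, zfun, fourier_apply, Circle.norm_coe]
    norm_num
  rw [Sstar, Toeplitz, symbMul_symbMul (memLp_top_const 1) _ _ (.of_forall hunit),
    symbMul_of_ae_eq_one _ (.of_forall fun _ => rfl)]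
  exact Submodule.starProjection_eq_self_iff.mpr hf

lemma Sstar_iterate_symbMul_zfun_pow (m : ℕ) {f : L2T} (hf : f ∈ H2) :
    Sstar^[m + 1] (symbMul (fun x => zfun x ^ m) (zpow_memLinfty m) f) = Sstar f := by
  induction m with
  | zero => rw [symbMul_of_ae_eq_one _ (.of_forall fun x => pow_zero (zfun x))]; rfl
  | succ m ih =>
    rw [Function.iterate_succ_apply,
      ← symbMul_symbMul _ zfun_memLinfty (zpow_memLinfty m)
        (.of_forall fun x => pow_succ' (zfun x) m),
      Sstar_symbMul_zfun (isAnalytic_zfun_pow m f hf), ih]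

lemma Sstar_eq_neg_sum_of_toeplitz_zfun_pow_add_sum_eq_zero {ι : Type*} [Fintype ι] (m : ℕ)
    (c : ι → ℂ) (v : ι → L2T) {h : L2T} (hh : h ∈ H2)
    (hker : Toeplitz (fun x => zfun x ^ m) (zpow_memLinfty m) h + ∑ i, c i • v i = 0) :
    Sstar h = -∑ i, c i • Sstar^[m + 1] (v i) := by
  have hpow : ⇑((toeplitzL _ conj_zfun_memLinfty).toLinearMap ^ (m + 1)) = Sstar^[m + 1] :=
    Module.End.coe_pow _ _
  have happ := congrArg ((toeplitzL _ conj_zfun_memLinfty).toLinearMap ^ (m + 1)) hker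
  simp only [map_add, map_sum, map_smul, map_zero, hpow] at happ
  rw [Toeplitz_eq_symbMul (isAnalytic_zfun_pow m) hh, Sstar_iterate_symbMul_zfun_pow m hh] at happ
  exact eq_neg_of_add_eq_zero_left happ

theorem kernel_perturbed_power_shift_nearly_Sstar_invariant_general
    (n m : ℕ) (u v : Fin n → L2T) :
    Module.finrank ℂ
        (Submodule.span ℂ (Set.range fun i => Sstar^[m + 1] (v i))) ≤ n
    ∧ ∀ h ∈ H2,
        (Toeplitz (fun x => zfun x ^ m) (zpow_memLinfty m) h + ∑ i, ⟪u i, h⟫ • v i = 0) →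
        ev0 h = 0 →
        ∃ w ∈ Submodule.span ℂ (Set.range fun i => Sstar^[m + 1] (v i)),
          Sstar h + w ∈ H2
          ∧ Toeplitz (fun x => zfun x ^ m) (zpow_memLinfty m) (Sstar h + w)
              + ∑ i, ⟪u i, Sstar h + w⟫ • v i = 0 := by
  refine ⟨by simpa [Set.finrank] using finrank_range_le_card (R := ℂ) fun i => Sstar^[m + 1] (v i),
    fun h hh hker _ => ⟨-Sstar h, ?_, ?_⟩⟩
  · rw [Sstar_eq_neg_sum_of_toeplitz_zfun_pow_add_sum_eq_zero m _ v hh hker, neg_neg]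
    exact Submodule.sum_mem _ fun i _ => Submodule.smul_mem _ _ (Submodule.subset_span ⟨i, rfl⟩)
  · rw [add_neg_cancel, ← coe_toeplitzL, map_zero]
    simp only [inner_zero_right, zero_smul, Finset.sum_const_zero, add_zero, and_true]
    exact H2.zero_mem

/-- For the symbol `z^m` and `Rₙh = z^m h + Σ ⟨h,uᵢ⟩vᵢ`, the kernel of `Rₙ`
is nearly `S*`-invariant with defect at most `n`, with defect space
`F = span{(S*)^{m+1} vᵢ}`. -/
theorem kernel_perturbed_power_shift_nearly_Sstar_invariant
    (n m : ℕ) (u v : Fin n → L2T)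
    (hu : ∀ i, u i ∈ H2) (huon : Orthonormal ℂ u)
    (hv : ∀ i, v i ∈ H2) (hvorth : ∀ i j, i ≠ j → ⟪v i, v j⟫ = 0) :
    Module.finrank ℂ
        (Submodule.span ℂ (Set.range fun i => Sstar^[m + 1] (v i))) ≤ n
    ∧ ∀ h ∈ H2,
        (Toeplitz (fun x => zfun x ^ m) (zpow_memLinfty m) h + ∑ i, ⟪u i, h⟫ • v i = 0) →
        ev0 h = 0 →
        ∃ w ∈ Submodule.span ℂ (Set.range fun i => Sstar^[m + 1] (v i)),
          Sstar h + w ∈ H2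
          ∧ Toeplitz (fun x => zfun x ^ m) (zpow_memLinfty m) (Sstar h + w)
              + ∑ i, ⟪u i, Sstar h + w⟫ • v i = 0 :=
  kernel_perturbed_power_shift_nearly_Sstar_invariant_general n m u v
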